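/- Let (V, d) be a chain complex over a field k and suppose h: V → V is a degree +1 linear map such that for every x ∈ V there exists n ≥ 0 with (d∘h + h∘d - id)^n(x) = 0. Then V is acyclic: every cycle in V is a boundary. -/
import Mathlib


/-- If `(V, d)` is a chain complex over a field `k` and `h : V → V` is a
degree `+1` linear map such that `P = d ∘ h + h ∘ d - id` is locally nilpotent, then `V` is
acyclic: every cycle is a boundary. -/
theorem acyclic_of_locally_nilpotent_homotopy
    {k V : Type} [Field k] [AddCommGroup V] [Module k V]
    (gr : ℤ → Submodule k V) [DirectSum.Decomposition gr]
    (d h : V →ₗ[k] V)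
    (hd2 : ∀ x, d (d x) = 0)
    (hddeg : ∀ (n : ℤ), ∀ x ∈ gr n, d x ∈ gr (n - 1))
    (hhdeg : ∀ (n : ℤ), ∀ x ∈ gr n, h x ∈ gr (n + 1))
    (hnil : ∀ x : V, ∃ n : ℕ, (((d ∘ₗ h + h ∘ₗ d - LinearMap.id : Module.End k V)) ^ n) x = 0) :
    ∀ x : V, d x = 0 → ∃ y : V, x = d y := by
  set P : Module.End k V := d ∘ₗ h + h ∘ₗ d - LinearMap.id with hP
  have key : ∀ n : ℕ, ∀ x : V, d x = 0 → (P ^ n) x = 0 → ∃ y, x = d y := by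
    intro n
    induction n with
    | zero =>
      intro x hdx h0
      simp only [pow_zero, Module.End.one_apply] at h0
      exact ⟨0, by simp [h0]⟩
    | succ n ih =>
      intro x hdx h0
      have hPxd : d (P x) = 0 := by
        simp [hP, map_add, map_sub, hdx, hd2]
      have hPn : (P ^ n) (P x) = 0 := by
        rw [← Module.End.mul_apply, ← pow_succ]
        exact h0
      obtain ⟨y, hy⟩ := ih (P x) hPxd hPn
      refine ⟨h x - y, ?_⟩
      have hx : P x = d (h x) - x := by simp [hP, hdx]
      rw [map_sub, ← hy, hx]
      abel
  intro x hdx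
  obtain ⟨n, hn⟩ := hnil x
  exact key n x hdx hn
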